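/- Fix reals λ, r, b, ν > 0, d ≥ 0 with b > d, δ > 0, and β̂ ≥ 0. Let q̃ be any of the three functions q̃(θ,ψ) = β̂ψ, q̃(θ,ψ) = β̂ψ(1−ψ), or q̃(θ,ψ) = β̂θψ, and let q(θ,ψ) := min{q̃(θ,ψ), 1}. Set ρ := λ/(r+b) and μ := b/ν, and assume ρ < 1 and β̂ < μ. Let θ̂ := 0, ψ̂ := 0, and η̂ := (b−d)/(b+d+ν). If η̂ > δ, then the point P := (0, 0, η̂) is a Lyapunov-stable equilibrium of g. -/

import Mathlib

/-- `ϱ(θ,ψ) = b + d + λθφ + νφ + rθ` with `φ = 1 − θ − ψ` (case `d_e = 0`). -/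
noncomputable def varrho (lam r b ν d θ ψ : ℝ) : ℝ :=
  b + d + lam * θ * (1 - θ - ψ) + ν * (1 - θ - ψ) + r * θ

/-- The vector field `g = (g^θ, g^ψ, g^η)` of the limit ODE for the epidemic model with
vaccination-response function `q`, on coordinates `(θ, ψ, η)`. -/
noncomputable def epiVF (lam r b ν d : ℝ) (q : ℝ → ℝ → ℝ) (x : ℝ × ℝ × ℝ) : ℝ × ℝ × ℝ :=
  (x.1 / (x.2.2 * varrho lam r b ν d x.1 x.2.1) * ((1 - x.1 - x.2.1) * lam - r - b),
   1 / (x.2.2 * varrho lam r b ν d x.1 x.2.1) *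
     (q x.1 x.2.1 * (1 - x.1 - x.2.1) * ν - b * x.2.1),
   (b - d) / varrho lam r b ν d x.1 x.2.1 - x.2.2)

/-- The domain `D = {(θ,ψ,η) : θ ≥ 0, ψ ≥ 0, θ+ψ ≤ 1, η > δ}`. -/
def domD (δ : ℝ) : Set (ℝ × ℝ × ℝ) :=
  {x | 0 ≤ x.1 ∧ 0 ≤ x.2.1 ∧ x.1 + x.2.1 ≤ 1 ∧ δ < x.2.2}

/-- `P ∈ D` is a Lyapunov-stable equilibrium of `g`: `g(P) = 0` and there are `r₀ > 0` and a
continuously differentiable `V` with `V(P) = 0`, `V(x) > 0` and `⟨∇V(x), g(x)⟩ < 0` for all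
`x ∈ D ∩ B(P,r₀)`, `x ≠ P`. -/
def IsLyapunovStableEquilibrium (g : ℝ × ℝ × ℝ → ℝ × ℝ × ℝ) (D : Set (ℝ × ℝ × ℝ))
    (P : ℝ × ℝ × ℝ) : Prop :=
  P ∈ D ∧ g P = 0 ∧
    ∃ r₀ > (0 : ℝ), ∃ V : ℝ × ℝ × ℝ → ℝ, ContDiff ℝ 1 V ∧ V P = 0 ∧
      ∀ x ∈ D ∩ Metric.ball P r₀, x ≠ P → 0 < V x ∧ fderiv ℝ V x (g x) < 0

/-! The Lyapunov function is `V = θ + ψ + (η - η̂)²`. On `D`, the `θ`- and `ψ`-parts of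
`⟨∇V, g⟩` add up to at most `-c (θ + ψ) / (η ϱ)` with `c = min (r + b - λ) (b - β̂ ν)`, positive
because `ρ < 1` and `β̂ < μ`. Since `η̂ = (b - d) / ϱ(0,0)`, the `η`-part is
`2 (η - η̂) (E - (η - η̂)) ≤ E² - (η - η̂)²` with `E = (b - d)/ϱ - (b - d)/ϱ(0,0) = O(θ + ψ)`.
Near `P` the linear decrease in `θ + ψ` dominates the quadratic error `E²`. -/

open Set

lemma abs_div_sub_div_le {a m x y : ℝ} (hm : 0 < m) (hx : m ≤ x) (hy : m ≤ y) :
    |a / x - a / y| ≤ |a| / m ^ 2 * |x - y| := by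
  have hx0 : 0 < x := hm.trans_le hx
  have hy0 : 0 < y := hm.trans_le hy
  have hxy : m ^ 2 ≤ x * y := by rw [sq]; exact mul_le_mul hx hy hm.le hx0.le
  rw [show a / x - a / y = a * (y - x) / (x * y) by field_simp, abs_div, abs_mul,
    abs_sub_comm, abs_of_pos (mul_pos hx0 hy0), div_mul_eq_mul_div]
  exact div_le_div_of_nonneg_left (by positivity) (by positivity) hxy

lemma min_response_mem_Icc {βh θ ψ : ℝ} {qt : ℝ → ℝ → ℝ} (hβ : 0 ≤ βh)
    (hqt : (∀ θ ψ, qt θ ψ = βh * ψ) ∨ (∀ θ ψ, qt θ ψ = βh * ψ * (1 - ψ)) ∨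
      (∀ θ ψ, qt θ ψ = βh * θ * ψ))
    (hθ₀ : 0 ≤ θ) (hψ₀ : 0 ≤ ψ) (hθψ : θ + ψ ≤ 1) :
    min (qt θ ψ) 1 ∈ Icc 0 (βh * ψ) := by
  have hβψ : 0 ≤ βh * ψ := mul_nonneg hβ hψ₀
  suffices qt θ ψ ∈ Icc 0 (βh * ψ) from
    ⟨le_min this.1 zero_le_one, (min_le_left _ _).trans this.2⟩
  rcases hqt with h | h | h <;> rw [h] <;> constructor
  · exact hβψ
  · exact le_rfl
  · exact mul_nonneg hβψ (by linarith)
  · exact mul_le_of_le_one_right hβψ (by linarith)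
  · exact mul_nonneg (mul_nonneg hβ hθ₀) hψ₀
  · nlinarith [mul_nonneg hβψ hψ₀]

section varrho

variable {lam r b ν d θ ψ : ℝ}

lemma varrho_zero_zero : varrho lam r b ν d 0 0 = b + d + ν := by
  simp [varrho]

lemma le_varrho (hlam : 0 ≤ lam) (hr : 0 ≤ r) (hν : 0 ≤ ν) (hd : 0 ≤ d) (hθ : 0 ≤ θ)
    (hφ : 0 ≤ 1 - θ - ψ) : b ≤ varrho lam r b ν d θ ψ := by
  unfold varrho
  nlinarith [mul_nonneg (mul_nonneg hlam hθ) hφ, mul_nonneg hν hφ, mul_nonneg hr hθ]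

lemma varrho_le (hlam : 0 ≤ lam) (hr : 0 ≤ r) (hν : 0 ≤ ν) (hθ : 0 ≤ θ) (hψ : 0 ≤ ψ)
    (hφ : 0 ≤ 1 - θ - ψ) : varrho lam r b ν d θ ψ ≤ b + d + lam + ν + r := by
  unfold varrho
  nlinarith [mul_nonneg (mul_nonneg hlam hθ) (add_nonneg hθ hψ), mul_nonneg hlam hφ,
    mul_nonneg hlam hψ, mul_nonneg hν hθ, mul_nonneg hν hψ, mul_nonneg hr hφ, mul_nonneg hr hψ]

lemma abs_varrho_sub_le (hlam : 0 ≤ lam) (hr : 0 ≤ r) (hν : 0 ≤ ν) (hθ : 0 ≤ θ) (hψ : 0 ≤ ψ)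
    (hφ : 0 ≤ 1 - θ - ψ) :
    |varrho lam r b ν d θ ψ - (b + d + ν)| ≤ (lam + ν + r) * (θ + ψ) := by
  unfold varrho
  rw [abs_le]
  constructor
  · nlinarith [mul_nonneg (mul_nonneg hlam hθ) hφ, mul_nonneg hr hθ, mul_nonneg hlam hθ,
      mul_nonneg hlam hψ, mul_nonneg hr hψ]
  · nlinarith [mul_nonneg (mul_nonneg hlam hθ) (add_nonneg hθ hψ), mul_nonneg hr hψ,
      mul_nonneg hν hθ, mul_nonneg hν hψ, mul_nonneg hlam hψ]

end varrho

section drift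

variable {lam r b ν d βh c θ ψ η : ℝ} {q : ℝ → ℝ → ℝ}

lemma epiVF_fst_add_snd_le (hlam : 0 ≤ lam) (hν : 0 ≤ ν) (hθ : 0 ≤ θ) (hψ : 0 ≤ ψ)
    (hq : q θ ψ ∈ Icc 0 (βh * ψ)) (hc₁ : c ≤ r + b - lam)
    (hc₂ : c ≤ b - βh * ν) (hpos : 0 < η * varrho lam r b ν d θ ψ) :
    (epiVF lam r b ν d q (θ, ψ, η)).1 + (epiVF lam r b ν d q (θ, ψ, η)).2.1 ≤
      -(c * (θ + ψ)) / (η * varrho lam r b ν d θ ψ) := by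
  obtain ⟨hq₀, hq₁⟩ := hq
  have hθ' : θ * ((1 - θ - ψ) * lam - r - b) ≤ -(c * θ) := by
    nlinarith [mul_nonneg (mul_nonneg hθ (add_nonneg hθ hψ)) hlam]
  have hψ' : q θ ψ * (1 - θ - ψ) * ν - b * ψ ≤ -(c * ψ) := by
    nlinarith [mul_nonneg (mul_nonneg hq₀ (add_nonneg hθ hψ)) hν,
      mul_nonneg (sub_nonneg.2 hq₁) hν]
  simp only [epiVF]
  rw [div_mul_eq_mul_div, one_div_mul_eq_div, ← add_div]
  exact div_le_div_of_nonneg_right (by linarith) hpos.le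

lemma two_mul_sub_mul_epiVF_snd_snd_le (hb : 0 < b) (hdν : 0 ≤ d + ν)
    (hϱ : b ≤ varrho lam r b ν d θ ψ) :
    2 * (η - (b - d) / (b + d + ν)) * (epiVF lam r b ν d q (θ, ψ, η)).2.2 ≤
      (|b - d| / b ^ 2 * |varrho lam r b ν d θ ψ - (b + d + ν)|) ^ 2
        - (η - (b - d) / (b + d + ν)) ^ 2 := by
  set e := η - (b - d) / (b + d + ν)
  set E := (b - d) / varrho lam r b ν d θ ψ - (b - d) / (b + d + ν)
  have hE : |E| ≤ |b - d| / b ^ 2 * |varrho lam r b ν d θ ψ - (b + d + ν)| :=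
    abs_div_sub_div_le hb hϱ (by linarith)
  have hg : (epiVF lam r b ν d q (θ, ψ, η)).2.2 = E - e := by simp only [epiVF, E, e]; ring
  rw [hg]
  nlinarith [sq_abs E, abs_nonneg E, sq_nonneg (E - e)]

end drift

def lyapunovFn (ηh : ℝ) (x : ℝ × ℝ × ℝ) : ℝ := x.1 + x.2.1 + (x.2.2 - ηh) ^ 2

lemma contDiff_lyapunovFn (ηh : ℝ) : ContDiff ℝ 1 (lyapunovFn ηh) := by
  unfold lyapunovFn; fun_prop

lemma fderiv_lyapunovFn_apply (ηh : ℝ) (x v : ℝ × ℝ × ℝ) :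
    fderiv ℝ (lyapunovFn ηh) x v = v.1 + v.2.1 + 2 * (x.2.2 - ηh) * v.2.2 := by
  have h : HasFDerivAt (lyapunovFn ηh) _ x := (hasFDerivAt_fst.add hasFDerivAt_snd.fst).add
    ((hasFDerivAt_snd.snd.sub_const ηh).pow 2) (x := x) (𝕜 := ℝ)
  rw [h.fderiv]
  simp

lemma mul_add_sub_sq_pos_of_ne {a θ ψ η ηh : ℝ} (ha : 0 < a) (hθ : 0 ≤ θ) (hψ : 0 ≤ ψ)
    (hne : (θ, ψ, η) ≠ (0, 0, ηh)) : 0 < a * (θ + ψ) + (η - ηh) ^ 2 := by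
  by_contra! h
  have hs : a * (θ + ψ) = 0 := by nlinarith [sq_nonneg (η - ηh)]
  have he : (η - ηh) ^ 2 = 0 := by nlinarith
  rw [mul_eq_zero, or_iff_right ha.ne'] at hs
  apply hne
  simp only [Prod.mk.injEq]
  exact ⟨by linarith, by linarith, by simpa [sub_eq_zero] using he⟩

section lyapunov

variable {lam r b ν d βh c η₁ θ ψ η : ℝ} {q : ℝ → ℝ → ℝ}

lemma epiVF_eq_zero (hq : q 0 0 = 0) :
    epiVF lam r b ν d q (0, 0, (b - d) / (b + d + ν)) = 0 := by
  simp [epiVF, varrho_zero_zero, hq]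

lemma fderiv_lyapunovFn_epiVF_le (hlam : 0 ≤ lam) (hr : 0 ≤ r) (hb : 0 < b) (hν : 0 ≤ ν)
    (hd : 0 ≤ d) (hc₀ : 0 ≤ c) (hc₁ : c ≤ r + b - lam) (hc₂ : c ≤ b - βh * ν)
    (hθ : 0 ≤ θ) (hψ : 0 ≤ ψ) (hφ : 0 ≤ 1 - θ - ψ) (hq : q θ ψ ∈ Icc 0 (βh * ψ))
    (hη₀ : 0 < η) (hη₁ : η ≤ η₁) :
    fderiv ℝ (lyapunovFn ((b - d) / (b + d + ν))) (θ, ψ, η) (epiVF lam r b ν d q (θ, ψ, η)) ≤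
      -(c / (η₁ * (b + d + lam + ν + r)) - (|b - d| / b ^ 2 * (lam + ν + r)) ^ 2 * (θ + ψ))
        * (θ + ψ) - (η - (b - d) / (b + d + ν)) ^ 2 := by
  have hϱ : b ≤ varrho lam r b ν d θ ψ := le_varrho hlam hr hν hd hθ hφ
  have hpos : 0 < η * varrho lam r b ν d θ ψ := mul_pos hη₀ (hb.trans_le hϱ)
  have hM : η * varrho lam r b ν d θ ψ ≤ η₁ * (b + d + lam + ν + r) :=
    mul_le_mul hη₁ (varrho_le hlam hr hν hθ hψ hφ) (by linarith) (by linarith)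
  have hdrift₁ := epiVF_fst_add_snd_le (d := d) (η := η) hlam hν hθ hψ hq hc₁ hc₂ hpos
  have hdrift₂ := two_mul_sub_mul_epiVF_snd_snd_le (q := q) (η := η) hb (by linarith) hϱ
  have hdiv : c * (θ + ψ) / (η₁ * (b + d + lam + ν + r)) ≤
      c * (θ + ψ) / (η * varrho lam r b ν d θ ψ) :=
    div_le_div_of_nonneg_left (by positivity) hpos hM
  have hsq : (|b - d| / b ^ 2 * |varrho lam r b ν d θ ψ - (b + d + ν)|) ^ 2 ≤
      (|b - d| / b ^ 2 * (lam + ν + r) * (θ + ψ)) ^ 2 := by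
    rw [mul_assoc]
    gcongr
    exact abs_varrho_sub_le hlam hr hν hθ hψ hφ
  rw [fderiv_lyapunovFn_apply]
  rw [neg_div] at hdrift₁
  calc _ ≤ -(c * (θ + ψ) / (η₁ * (b + d + lam + ν + r))) +
        (|b - d| / b ^ 2 * (lam + ν + r) * (θ + ψ)) ^ 2 - (η - (b - d) / (b + d + ν)) ^ 2 := by
        linarith
    _ = _ := by ring

end lyapunov

theorem stmt_8_general (lam r b ν d δ βh ρ μ ηh : ℝ)
    (hlam : 0 < lam) (hr : 0 < r) (hb : 0 < b) (hν : 0 < ν)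
    (hd : 0 ≤ d) (hδ : 0 < δ) (hβ : 0 ≤ βh)
    (hρdef : ρ = lam / (r + b)) (hμdef : μ = b / ν)
    (hρ : ρ < 1) (hβlt : βh < μ)
    (qt : ℝ → ℝ → ℝ)
    (hqt : (∀ θ ψ, qt θ ψ = βh * ψ) ∨ (∀ θ ψ, qt θ ψ = βh * ψ * (1 - ψ)) ∨
      (∀ θ ψ, qt θ ψ = βh * θ * ψ))
    (hηdef : ηh = (b - d) / (b + d + ν)) (hη : δ < ηh) :
    IsLyapunovStableEquilibrium
      (epiVF lam r b ν d (fun θ ψ => min (qt θ ψ) 1)) (domD δ) (0, 0, ηh) := by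
  rw [hρdef, div_lt_one (by positivity)] at hρ
  rw [hμdef, lt_div_iff₀ hν] at hβlt
  set c := min (r + b - lam) (b - βh * ν)
  set M := (ηh + 1) * (b + d + lam + ν + r)
  set K := |b - d| / b ^ 2 * (lam + ν + r)
  have hc : 0 < c := lt_min (by linarith) (by linarith)
  have ha : 0 < c / M := by have : 0 < ηh := hδ.trans hη; positivity
  have hq θ ψ (hθ : 0 ≤ θ) (hψ : 0 ≤ ψ) (hθψ : θ + ψ ≤ 1) :=
    min_response_mem_Icc hβ hqt hθ hψ hθψ
  refine ⟨⟨le_rfl, le_rfl, by norm_num, hη⟩, ?_, min 1 (c / M / (K ^ 2 + 1) / 2),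
    by positivity, lyapunovFn ηh, contDiff_lyapunovFn ηh, by simp [lyapunovFn], ?_⟩
  · have hq₀ := hq 0 0 le_rfl le_rfl (by norm_num)
    rw [hηdef]
    exact epiVF_eq_zero (le_antisymm (by simpa using hq₀.2) hq₀.1)
  rintro ⟨θ, ψ, η⟩ ⟨⟨hθ, hψ, hθψ, hδη⟩, hball⟩ hne
  simp only [Metric.mem_ball, Prod.dist_eq, Real.dist_eq, sub_zero, max_lt_iff, lt_min_iff,
    abs_lt] at hball hθ hψ hθψ hδη
  have hs : K ^ 2 * (θ + ψ) < c / M := by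
    have : (K ^ 2 + 1) * (θ + ψ) < c / M := by
      rw [← lt_div_iff₀' (by positivity)]; linarith
    nlinarith
  refine ⟨by simpa [lyapunovFn] using mul_add_sub_sq_pos_of_ne one_pos hθ hψ hne, ?_⟩
  have hV := fderiv_lyapunovFn_epiVF_le (q := fun θ ψ => min (qt θ ψ) 1) hlam.le hr.le hb
    hν.le hd hc.le (min_le_left _ _) (min_le_right _ _) hθ hψ (by linarith) (hq θ ψ hθ hψ hθψ)
    (hδ.trans hδη) (show η ≤ ηh + 1 by linarith)
  rw [← hηdef] at hV
  linarith [mul_add_sub_sq_pos_of_ne (sub_pos.2 hs) hθ hψ hne]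

/-- Self-eradicating disease `ρ < 1` with `β̂ < μ`: for each of the three
responses `q̃ = β̂ψ` (FC), `q̃ = β̂ψ(1−ψ)` (FR), `q̃ = β̂θψ` (VFC1), the disease-free
unvaccinated point `(0, 0, (b−d)/(b+d+ν))` is a Lyapunov-stable equilibrium of `g` for
`q = min{q̃, 1}`. -/
theorem stmt_8 (lam r b ν d δ βh ρ μ ηh : ℝ)
    (hlam : 0 < lam) (hr : 0 < r) (hb : 0 < b) (hν : 0 < ν)
    (hd : 0 ≤ d) (hbd : d < b) (hδ : 0 < δ) (hβ : 0 ≤ βh)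
    (hρdef : ρ = lam / (r + b)) (hμdef : μ = b / ν)
    (hρ : ρ < 1) (hβlt : βh < μ)
    (qt : ℝ → ℝ → ℝ)
    (hqt : (∀ θ ψ, qt θ ψ = βh * ψ) ∨ (∀ θ ψ, qt θ ψ = βh * ψ * (1 - ψ)) ∨
      (∀ θ ψ, qt θ ψ = βh * θ * ψ))
    (hηdef : ηh = (b - d) / (b + d + ν)) (hη : δ < ηh) :
    IsLyapunovStableEquilibrium
      (epiVF lam r b ν d (fun θ ψ => min (qt θ ψ) 1)) (domD δ) (0, 0, ηh) :=
  stmt_8_general lam r b ν d δ βh ρ μ ηh hlam hr hb hν hd hδ hβ hρdef hμdef hρ hβlt qt hqt hηdef hη
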